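/- arXiv:1807.06822 — 2 statements merged into one kernel-verified Lean document; each statement's English description precedes it below -/
import Mathlib

section
/- The diffusion-critical agents of any agent i form a totally ordered sequence: if j and k are both diffusion-critical agents of i, then either d_j ⊇ d_k or d_k ⊇ d_j, where d_x is the set of agents having x as a diffusion-critical agent. Hence the diffusion-critical agents of i can be arranged in a sequence C_i = {s_1,...,s_k,i} with d_{s_1} ⊃ d_{s_2} ⊃ ... ⊃ d_{s_k} ⊃ d_i. -/
/-- `i` is a diffusion-critical agent of `x`: every trading chain (simple path) from
the seller `s` to `x` passes through `i`. -/
def DiffCritical {V : Type*} (G : SimpleGraph V) (s i x : V) : Prop :=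
  ∀ p : G.Path s x, i ∈ p.1.support

/-- `dSet G s i` is the set of agents having `i` as a diffusion-critical agent. -/
def dSet {V : Type*} (G : SimpleGraph V) (s i : V) : Set V :=
  {x | DiffCritical G s i x}

/-- If there is a walk from `k` to `i` avoiding `j`, and `j` is diffusion-critical
for `i`, then `j` is diffusion-critical for `k`. -/
lemma crit_of_walk {V : Type*} {G : SimpleGraph V} {s i j k : V}
    (t : G.Walk k i) (hjt : j ∉ t.support) (hj : DiffCritical G s j i) :
    DiffCritical G s j k := by
  classical
  intro q
  by_contra hq
  have hmem := hj ((q.1.append t).toPath)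
  have hsub := SimpleGraph.Walk.support_toPath_subset (q.1.append t)
  have := hsub hmem
  rw [SimpleGraph.Walk.mem_support_append_iff] at this
  rcases this with h | h
  · exact hq h
  · exact hjt h

/-- If `j` is diffusion-critical for `k`, then `dSet k ⊆ dSet j`. -/
lemma dSet_subset_of_crit {V : Type*} {G : SimpleGraph V} {s j k : V}
    (h : DiffCritical G s j k) : dSet G s k ⊆ dSet G s j := by
  classical
  intro x hx q
  have hkq : k ∈ q.1.support := hx q
  have hq' : (q.1.takeUntil k hkq).IsPath := q.2.takeUntil hkq
  exact SimpleGraph.Walk.support_takeUntil_subset q.1 hkq (h ⟨q.1.takeUntil k hkq, hq'⟩)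

/-- the diffusion-critical agents of any agent `i` are totally ordered:
if `j` and `k` are both diffusion-critical agents of `i`, then `d_j ⊇ d_k` or
`d_k ⊇ d_j` (hence they can be arranged in a diffusion-critical sequence). -/
theorem stmt1 {V : Type*} (G : SimpleGraph V) (s i : V)
    (hconn : ∀ x : V, G.Reachable s x) (j k : V)
    (hj : DiffCritical G s j i) (hk : DiffCritical G s k i) :
    dSet G s k ⊆ dSet G s j ∨ dSet G s j ⊆ dSet G s k := by
  classical
  by_cases hjk : j = k
  · subst hjk; exact Or.inl (subset_refl _)
  obtain ⟨w⟩ := hconn i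
  set p : G.Path s i := w.toPath with hp
  have hjp : j ∈ p.1.support := hj p
  have hkp : k ∈ p.1.support := hk p
  have hnodup : p.1.support.Nodup := p.2.support_nodup
  have hspec := p.1.take_spec hkp
  have hsupp : p.1.support =
      (p.1.takeUntil k hkp).support ++ (p.1.dropUntil k hkp).support.tail := by
    conv_lhs => rw [← hspec]
    exact SimpleGraph.Walk.support_append _ _
  by_cases hcase : j ∈ (p.1.takeUntil k hkp).support
  · -- j before k : j is critical for k
    left
    apply dSet_subset_of_crit
    apply crit_of_walk (p.1.dropUntil k hkp) _ hj
    intro hjd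
    have hjd' : j ∈ (p.1.dropUntil k hkp).support.tail := by
      have := (p.1.dropUntil k hkp).support_eq_cons
      rw [this, List.mem_cons] at hjd
      rcases hjd with h | h
      · exact absurd h hjk
      · exact h
    have hdisj := List.disjoint_of_nodup_append (hsupp ▸ hnodup)
    exact hdisj hcase hjd'
  · -- k before j : k is critical for j
    right
    apply dSet_subset_of_crit
    have hjd : j ∈ (p.1.dropUntil k hkp).support := by
      have : j ∈ (p.1.takeUntil k hkp).support ∨
          j ∈ (p.1.dropUntil k hkp).support.tail := by
        have := hsupp ▸ hjp
        exact List.mem_append.mp this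
      rcases this with h | h
      · exact absurd h hcase
      · exact List.mem_of_mem_tail h
    set drop := p.1.dropUntil k hkp with hdrop
    have hdpath : drop.IsPath := p.2.dropUntil hkp
    apply crit_of_walk (drop.dropUntil j hjd) _ hk
    intro hkd
    have hkd' : k ∈ (drop.dropUntil j hjd).support.tail := by
      have := (drop.dropUntil j hjd).support_eq_cons
      rw [this, List.mem_cons] at hkd
      rcases hkd with h | h
      · exact absurd h.symm hjk
      · exact h
    have hsupp2 : drop.support =
        (drop.takeUntil j hjd).support ++ (drop.dropUntil j hjd).support.tail := by
      conv_lhs => rw [← drop.take_spec hjd]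
      exact SimpleGraph.Walk.support_append _ _
    have hdisj := List.disjoint_of_nodup_append (hsupp2 ▸ hdpath.support_nodup)
    exact hdisj (drop.takeUntil j hjd).start_mem_support hkd'
end

section
/- In the CSM mechanism, truthful bidding is a dominant strategy for every buyer: for any fixed reports of the other agents, a buyer's utility when reporting her true valuation b_i is at least her utility under any other report b_i', and this truthful utility equals W*(t) − W*_{-i} ≥ 0. -/
/-- Optimal social welfare `W*` for bid profile `β`: the maximum over buyers `j`
of `β j` minus the minimal transaction cost `cost j` of a trading chain from the
seller to `j`, at least `0` (no trade is allowed). -/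
noncomputable def Wstar {V : Type*} [Fintype V] (cost : V → ℝ) (β : V → ℝ) : ℝ :=
  (insert (0 : ℝ) (Finset.univ.image fun j => β j - cost j)).max'
    (Finset.insert_nonempty _ _)

/-- Optimal social welfare `W*_{-i}` when buyer `i` is removed. -/
noncomputable def WstarMinus {V : Type*} [Fintype V] [DecidableEq V]
    (cost : V → ℝ) (β : V → ℝ) (i : V) : ℝ :=
  (insert (0 : ℝ) ((Finset.univ.erase i).image fun j => β j - cost j)).max'
    (Finset.insert_nonempty _ _)

lemma le_Wstar {V : Type*} [Fintype V] (cost : V → ℝ) (β : V → ℝ) (j : V) :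
    β j - cost j ≤ Wstar cost β := by
  apply Finset.le_max'
  exact Finset.mem_insert_of_mem (Finset.mem_image_of_mem _ (Finset.mem_univ j))

lemma WstarMinus_le_Wstar {V : Type*} [Fintype V] [DecidableEq V]
    (cost : V → ℝ) (β : V → ℝ) (i : V) :
    WstarMinus cost β i ≤ Wstar cost β := by
  apply Finset.max'_le
  intro y hy
  rcases Finset.mem_insert.1 hy with h | h
  · subst h
    exact Finset.le_max' _ _ (Finset.mem_insert_self _ _)
  · rcases Finset.mem_image.1 h with ⟨j, _, rfl⟩
    exact le_Wstar cost β j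

lemma WstarMinus_congr {V : Type*} [Fintype V] [DecidableEq V]
    (cost : V → ℝ) (β β' : V → ℝ) (i : V) (h : ∀ j, j ≠ i → β' j = β j) :
    WstarMinus cost β' i = WstarMinus cost β i := by
  unfold WstarMinus
  congr 2
  apply Finset.image_congr
  intro j hj
  have hji : j ≠ i := Finset.ne_of_mem_erase (Finset.mem_coe.mp hj)
  simp only [h j hji]

/-- in CSM, truthful bidding is a dominant strategy for every buyer.
Buyer `i` pays `W*_{-i} - W*(t') + v_i`.  For any fixed reports of the others
(encoded in the chain costs `cost` and the other bids, which agree between the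
truthful profile `b` and the deviation `b'`), her truthful utility equals
`W*(t) - W*_{-i} ≥ 0` and is at least her utility under any other report. -/
theorem stmt6 {V : Type*} [Fintype V] [DecidableEq V]
    (cost : V → ℝ) (b : V → ℝ) (hb : ∀ j, 0 ≤ b j) (i : V)
    (b' : V → ℝ) (hb' : ∀ j, j ≠ i → b' j = b j)
    (winT winD : Prop) [Decidable winT] [Decidable winD]
    -- if `i` wins, she attains the optimal welfare; if she loses, the optimum
    -- is attained without her
    (hwinT : winT → b i - cost i = Wstar cost b)
    (hlossT : ¬winT → Wstar cost b = WstarMinus cost b i)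
    (hwinD : winD → b' i - cost i = Wstar cost b')
    (hlossD : ¬winD → Wstar cost b' = WstarMinus cost b' i) :
    -- utilities: true value of the allocation minus the CSM payment
    (if winT then b i else 0) -
        (WstarMinus cost b i - Wstar cost b + (if winT then b i else 0)) =
      Wstar cost b - WstarMinus cost b i ∧
    0 ≤ Wstar cost b - WstarMinus cost b i ∧
    (if winD then b i else 0) -
        (WstarMinus cost b' i - Wstar cost b' + (if winD then b' i else 0)) ≤
      Wstar cost b - WstarMinus cost b i := by
  have hcongr := WstarMinus_congr cost b b' i hb'
  have hle := WstarMinus_le_Wstar cost b i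
  refine ⟨by ring, by linarith, ?_⟩
  by_cases hD : winD
  · simp only [hD, if_pos]
    have h1 := hwinD hD
    have h2 := le_Wstar cost b i
    linarith [hcongr]
  · simp only [hD, if_neg, not_false_iff]
    have h1 := hlossD hD
    rw [hcongr] at h1 ⊢
    linarith
end
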